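/- arXiv:0802.3703 — 4 statements merged into one kernel-verified Lean document; each statement's English description precedes it below -/
import Mathlib

section
/- For elements x = (s, t) and y = (u, v) of the cobweb poset Π(F) with x ≤ y and t < v, the cardinality of the closed interval [x, y] = {z : x ≤ z ≤ y} equals (Σ_{i=t+1}^{v-1} F i) + 2. -/
/-! The interval `[x, y]` consists of `x`, `y` and every element on a level strictly between
theirs: an element on the level of `x` (resp. `y`) is comparable to it only if it equals it,
while everything on an intermediate level lies above `x` and below `y`. Level `i` has `F i`
elements. -/

/-- The underlying set of the cobweb poset. -/
def CobwebSet (F : ℕ → ℕ) : Set (ℕ × ℕ) := {p | 1 ≤ p.1 ∧ p.1 ≤ F p.2}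

/-- The cobweb relation on pairs `(j, s)`. -/
def cobwebRel (x y : ℕ × ℕ) : Prop := x.2 < y.2 ∨ (x.2 = y.2 ∧ x.1 = y.1)

/-- The cobweb poset `Π(F)` as a type. -/
def Cobweb (F : ℕ → ℕ) : Type := {p : ℕ × ℕ // 1 ≤ p.1 ∧ p.1 ≤ F p.2}

instance (F : ℕ → ℕ) : PartialOrder (Cobweb F) where
  le x y := x.val.2 < y.val.2 ∨ (x.val.2 = y.val.2 ∧ x.val.1 = y.val.1)
  le_refl x := Or.inr ⟨rfl, rfl⟩
  le_trans x y z hxy hyz := by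
    rcases hxy with h | ⟨h1, h2⟩ <;> rcases hyz with h' | ⟨h1', h2'⟩
    · exact Or.inl (h.trans h')
    · exact Or.inl (h1' ▸ h)
    · exact Or.inl (h1 ▸ h')
    · exact Or.inr ⟨h1.trans h1', h2.trans h2'⟩
  le_antisymm x y hxy hyx := by
    rcases hxy with h | ⟨h1, h2⟩ <;> rcases hyx with h' | ⟨h1', h2'⟩
    · exact absurd (h.trans h') (lt_irrefl _)
    · exfalso; omega
    · exfalso; omega
    · exact Subtype.ext (Prod.ext h2 h1)

namespace Cobweb

variable {F : ℕ → ℕ}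

theorem val_injective : Function.Injective fun z : Cobweb F => z.val :=
  Subtype.val_injective

theorem le_iff_eq_or_level_lt {x y : Cobweb F} : x ≤ y ↔ x = y ∨ x.val.2 < y.val.2 := by
  change x.val.2 < y.val.2 ∨ (x.val.2 = y.val.2 ∧ x.val.1 = y.val.1) ↔ _
  rw [val_injective.eq_iff.symm, Prod.ext_iff]
  tauto

theorem Icc_eq_insert_insert {x y : Cobweb F} (h : x.val.2 < y.val.2) :
    Set.Icc x y = insert x (insert y {z | z.val.2 ∈ Finset.Ioo x.val.2 y.val.2}) := by
  ext z
  simp only [Set.mem_Icc, Set.mem_insert_iff, Set.mem_ofPred_eq, le_iff_eq_or_level_lt,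
    Finset.mem_Ioo]
  constructor
  · rintro ⟨rfl | hxz, rfl | hzy⟩ <;> tauto
  · rintro (rfl | rfl | hz) <;> tauto

theorem image_val_setOf_level_mem (S : Finset ℕ) :
    (fun z : Cobweb F => z.val) '' {z | z.val.2 ∈ S} =
      ↑(S.biUnion fun i => Finset.Icc 1 (F i) ×ˢ {i}) := by
  ext ⟨j, i⟩
  simp only [Set.mem_image, Set.mem_ofPred_eq, Finset.coe_biUnion, Set.mem_iUnion,
    Finset.mem_coe, Finset.mem_product, Finset.mem_Icc, Finset.mem_singleton]
  constructor
  · rintro ⟨⟨⟨j, i⟩, hj⟩, hi, hji⟩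
    obtain ⟨rfl, rfl⟩ := Prod.ext_iff.mp hji
    exact ⟨i, hi, hj, rfl⟩
  · rintro ⟨i, hi, hj, rfl⟩
    exact ⟨⟨(j, i), hj⟩, hi, rfl⟩

theorem finite_setOf_level_mem (S : Finset ℕ) : {z : Cobweb F | z.val.2 ∈ S}.Finite := by
  refine Set.Finite.of_finite_image ?_ val_injective.injOn
  rw [image_val_setOf_level_mem]
  exact Finset.finite_toSet _

theorem ncard_setOf_level_mem (S : Finset ℕ) :
    {z : Cobweb F | z.val.2 ∈ S}.ncard = ∑ i ∈ S, F i := by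
  rw [← Set.ncard_image_of_injective _ val_injective, image_val_setOf_level_mem,
    Set.ncard_coe_finset, Finset.card_biUnion]
  · simp
  · intro i _ i' _ hii'
    refine Finset.disjoint_left.mpr fun p hp hp' => hii' ?_
    rw [Finset.mem_product, Finset.mem_singleton] at hp hp'
    exact hp.2.symm.trans hp'.2

end Cobweb

theorem cobweb_card_interval_general (F : ℕ → ℕ)
    (x y : Cobweb F) (h : x.val.2 < y.val.2) :
    {z : Cobweb F | x ≤ z ∧ z ≤ y}.ncard =
      (∑ i ∈ Finset.Icc (x.val.2 + 1) (y.val.2 - 1), F i) + 2 := by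
  have hlevels : Finset.Icc (x.val.2 + 1) (y.val.2 - 1) = Finset.Ioo x.val.2 y.val.2 := by
    ext i
    simp only [Finset.mem_Icc, Finset.mem_Ioo]
    omega
  have hx : x ∉ insert y {z : Cobweb F | z.val.2 ∈ Finset.Ioo x.val.2 y.val.2} := by
    rintro (rfl | hx) <;> simp_all
  have hy : y ∉ {z : Cobweb F | z.val.2 ∈ Finset.Ioo x.val.2 y.val.2} := by
    simp
  change (Set.Icc x y).ncard = _
  rw [Cobweb.Icc_eq_insert_insert h,
    Set.ncard_insert_of_notMem hx ((Cobweb.finite_setOf_level_mem _).insert y),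
    Set.ncard_insert_of_notMem hy (Cobweb.finite_setOf_level_mem _),
    Cobweb.ncard_setOf_level_mem, hlevels]

/-- for `x = (s, t) ≤ y = (u, v)` with `t < v`, the cardinality of the
closed interval `[x, y]` equals `(Σ_{i=t+1}^{v-1} F i) + 2`. -/
theorem cobweb_card_interval (F : ℕ → ℕ) (hF : ∀ s, 1 ≤ F s) (hF0 : F 0 = 1)
    (x y : Cobweb F) (hxy : x ≤ y) (h : x.val.2 < y.val.2) :
    {z : Cobweb F | x ≤ z ∧ z ≤ y}.ncard =
      (∑ i ∈ Finset.Icc (x.val.2 + 1) (y.val.2 - 1), F i) + 2 :=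
  cobweb_card_interval_general F x y h
end

section
/- The Möbius function μ of the cobweb poset Π(F) is given explicitly as follows: for x = (s, t) and y = (u, v) in Π(F), μ(x, x) = 1; if v = t + 1 then μ(x, y) = −1; if v ≥ t + 2 then μ(x, y) = (−1)^{v−t} · Π_{i=t+1}^{v−1} (F i − 1); and μ(x, y) = 0 whenever x ≤ y fails. -/
/-!
For `x` on level `t` and `y` on level `v > t`, the interval `[x, y)` consists of `x` together
with all of the levels `t + 1, …, v - 1`. By induction on `v`, `μ x z` depends only on the level
`s` of `z`, say `m s`, and the recursion becomes `1 + ∑_{t < s < v} F s * m s = -m v`. Passing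
from `v` to `v + 1` adds the `F v` copies of `m v` to the sum, so `m (v + 1) = -(F v - 1) * m v`,
which gives `m v = (-1) ^ (v - t) * ∏_{t < i < v} (F i - 1)`.
-/

open Finset

def ordinalSumMobius (c : ℕ → ℤ) (t v : ℕ) : ℤ :=
  (-1) ^ (v - t) * ∏ i ∈ Ioo t v, (c i - 1)

lemma ordinalSumMobius_succ (c : ℕ → ℤ) {t v : ℕ} (h : t < v) :
    ordinalSumMobius c t (v + 1) = -(c v - 1) * ordinalSumMobius c t v := by
  rw [ordinalSumMobius, ordinalSumMobius, Ioo_add_one_right_eq_Ioc, ← Ioo_insert_right h,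
    prod_insert (by simp), show v + 1 - t = v - t + 1 by omega, pow_succ]
  ring

lemma one_add_sum_mul_ordinalSumMobius (c : ℕ → ℤ) {t v : ℕ} (h : t < v) :
    1 + ∑ s ∈ Ioo t v, c s * ordinalSumMobius c t s = -ordinalSumMobius c t v := by
  induction v, h using Nat.le_induction with
  | base => simp [ordinalSumMobius, Ioo_add_one_right_eq_Ioc]
  | succ v hv ih =>
    rw [Ioo_add_one_right_eq_Ioc, ← Ioo_insert_right hv, sum_insert (by simp),
      ordinalSumMobius_succ c hv]
    linear_combination ih

lemma finsum_mem_const_eq_ncard_nsmul {α M : Type*} [AddCommMonoid M] {S : Set α}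
    (hS : S.Finite) (c : M) : ∑ᶠ z ∈ S, c = S.ncard • c := by
  rw [finsum_mem_eq_finite_toFinset_sum _ hS, sum_const, Set.ncard_eq_toFinset_card _ hS]

def IsOrdinalSumOfAntichains {P : Type*} [PartialOrder P] (ℓ : P → ℕ) : Prop :=
  ∀ x y, x ≤ y ↔ x = y ∨ ℓ x < ℓ y

namespace IsOrdinalSumOfAntichains

variable {P : Type*} [PartialOrder P] {ℓ : P → ℕ}

lemma lt_iff (hℓ : IsOrdinalSumOfAntichains ℓ) {x y : P} : x < y ↔ ℓ x < ℓ y := by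
  rw [lt_iff_le_and_ne, hℓ]
  constructor
  · rintro ⟨h | h, hne⟩
    · exact absurd h hne
    · exact h
  · intro h
    exact ⟨Or.inr h, by rintro rfl; exact lt_irrefl _ h⟩

lemma Ico_eq_insert_biUnion (hℓ : IsOrdinalSumOfAntichains ℓ) {x y : P} (h : ℓ x < ℓ y) :
    Set.Ico x y = insert x (⋃ s ∈ (Ioo (ℓ x) (ℓ y) : Set ℕ), ℓ ⁻¹' {s}) := by
  ext z
  simp only [Set.mem_Ico, hℓ x z, hℓ.lt_iff, Set.mem_insert_iff, Set.mem_iUnion,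
    Set.mem_preimage, Set.mem_singleton_iff, coe_Ioo, Set.mem_Ioo, exists_prop, exists_eq_right']
  constructor
  · rintro ⟨rfl | hxz, hzy⟩
    · exact Or.inl rfl
    · exact Or.inr ⟨hxz, hzy⟩
  · rintro (rfl | ⟨hxz, hzy⟩)
    · exact ⟨Or.inl rfl, h⟩
    · exact ⟨Or.inr hxz, hzy⟩

lemma finsum_mem_Ico {M : Type*} [AddCommMonoid M] (hℓ : IsOrdinalSumOfAntichains ℓ)
    (hfin : ∀ s, (ℓ ⁻¹' {s}).Finite) (f : P → M) {x y : P} (h : ℓ x < ℓ y) :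
    ∑ᶠ z ∈ Set.Ico x y, f z = f x + ∑ s ∈ Ioo (ℓ x) (ℓ y), ∑ᶠ z ∈ ℓ ⁻¹' {s}, f z := by
  have hdisj : (Ioo (ℓ x) (ℓ y) : Set ℕ).PairwiseDisjoint fun s => ℓ ⁻¹' {s} :=
    fun _ _ _ _ hst => (Set.disjoint_singleton.2 hst).preimage ℓ
  have hx : x ∉ ⋃ s ∈ (Ioo (ℓ x) (ℓ y) : Set ℕ), ℓ ⁻¹' {s} := by simp
  rw [hℓ.Ico_eq_insert_biUnion h, finsum_mem_insert _ hx ((finite_toSet _).biUnion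
      fun s _ => hfin s), finsum_mem_biUnion hdisj (finite_toSet _) fun s _ => hfin s,
    finsum_mem_coe_finset]

theorem mobius_eq_ordinalSumMobius (hℓ : IsOrdinalSumOfAntichains ℓ)
    (hfin : ∀ s, (ℓ ⁻¹' {s}).Finite) (μ : P → P → ℤ) (hdiag : ∀ x, μ x x = 1)
    (hrec : ∀ x y, x < y → μ x y = -∑ᶠ z ∈ Set.Ico x y, μ x z) {x y : P} (h : ℓ x < ℓ y) :
    μ x y = ordinalSumMobius (fun s => (ℓ ⁻¹' {s}).ncard) (ℓ x) (ℓ y) := by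
  suffices H : ∀ v, ℓ x < v → ∀ y, ℓ y = v →
      μ x y = ordinalSumMobius (fun s => (ℓ ⁻¹' {s}).ncard) (ℓ x) v from H _ h y rfl
  clear h y
  intro v
  induction v using Nat.strong_induction_on with
  | _ v ih =>
  rintro h y rfl
  have hfiber : ∀ s ∈ Ioo (ℓ x) (ℓ y), ∑ᶠ z ∈ ℓ ⁻¹' {s}, μ x z =
      (ℓ ⁻¹' {s}).ncard * ordinalSumMobius (fun s => (ℓ ⁻¹' {s}).ncard) (ℓ x) s := by
    intro s hs
    rw [mem_Ioo] at hs
    rw [finsum_mem_congr (rfl : ℓ ⁻¹' {s} = _) fun z hz => ih s hs.2 hs.1 z hz,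
      finsum_mem_const_eq_ncard_nsmul (hfin s), nsmul_eq_mul]
  rw [hrec x y (hℓ.lt_iff.2 h), hℓ.finsum_mem_Ico hfin _ h, hdiag, sum_congr rfl hfiber,
    one_add_sum_mul_ordinalSumMobius _ h, neg_neg]

end IsOrdinalSumOfAntichains

namespace Cobweb

variable {F : ℕ → ℕ}

lemma isOrdinalSumOfAntichains_snd :
    IsOrdinalSumOfAntichains fun z : Cobweb F => z.val.2 := by
  intro x y
  change _ ∨ _ ↔ _
  constructor
  · rintro (h | ⟨h₂, h₁⟩)
    · exact Or.inr h
    · exact Or.inl (Subtype.ext (Prod.ext h₁ h₂))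
  · rintro (rfl | h)
    · exact Or.inr ⟨rfl, rfl⟩
    · exact Or.inl h

def levelEquivIcc (F : ℕ → ℕ) (s : ℕ) :
    (fun z : Cobweb F => z.val.2) ⁻¹' {s} ≃ Set.Icc 1 (F s) where
  toFun z := ⟨z.1.val.1, by obtain ⟨⟨⟨j, _⟩, hj⟩, rfl⟩ := z; exact hj⟩
  invFun j := ⟨⟨(j.1, s), j.2⟩, rfl⟩
  left_inv := by rintro ⟨⟨⟨j, _⟩, hj⟩, rfl⟩; rfl
  right_inv _ := rfl

lemma finite_level (s : ℕ) : ((fun z : Cobweb F => z.val.2) ⁻¹' {s}).Finite :=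
  have := Finite.of_equiv _ (levelEquivIcc F s).symm
  Set.toFinite _

lemma ncard_level (s : ℕ) : ((fun z : Cobweb F => z.val.2) ⁻¹' {s}).ncard = F s := by
  rw [← Nat.card_coe_set_eq, Nat.card_congr (levelEquivIcc F s), Nat.card_coe_set_eq,
    Set.ncard_Icc_nat, Nat.add_sub_cancel]

end Cobweb

theorem cobweb_mobius_formula_general (F : ℕ → ℕ)
    (μ : Cobweb F → Cobweb F → ℤ)
    (hdiag : ∀ x, μ x x = 1)
    (hrec : ∀ x y, x < y → μ x y = -∑ᶠ z ∈ Set.Ico x y, μ x z)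
    (hzero : ∀ x y, ¬x ≤ y → μ x y = 0) :
    ∀ x y : Cobweb F,
      (μ x x = 1) ∧
      (y.val.2 = x.val.2 + 1 → μ x y = -1) ∧
      (x.val.2 + 2 ≤ y.val.2 →
        μ x y = (-1) ^ (y.val.2 - x.val.2) *
          ∏ i ∈ Finset.Icc (x.val.2 + 1) (y.val.2 - 1), ((F i : ℤ) - 1)) ∧
      (¬x ≤ y → μ x y = 0) := by
  intro x y
  have hμ (h : x.val.2 < y.val.2) : μ x y = ordinalSumMobius (fun i => F i) x.val.2 y.val.2 := by
    simpa only [Cobweb.ncard_level] using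
      Cobweb.isOrdinalSumOfAntichains_snd.mobius_eq_ordinalSumMobius Cobweb.finite_level μ
        hdiag hrec h
  refine ⟨hdiag x, fun h => ?_, fun h => ?_, hzero x y⟩
  · rw [hμ (by omega), h]
    simp [ordinalSumMobius, Ioo_add_one_right_eq_Ioc]
  · rw [hμ (by omega), ordinalSumMobius, Icc_add_one_sub_one_eq_Ioo]

/-- the Möbius function of the cobweb poset (defined by the usual
recursion `μ(x,x) = 1`, `μ(x,y) = -Σ_{x ≤ z < y} μ(x,z)` for `x < y`, and
`μ(x,y) = 0` unless `x ≤ y`) is given explicitly: `μ(x,x) = 1`; `μ(x,y) = -1`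
when `v = t + 1`; `μ(x,y) = (-1)^(v-t) · Π_{i=t+1}^{v-1} (F i - 1)` when
`v ≥ t + 2`; and `μ(x,y) = 0` unless `x ≤ y`. -/
theorem cobweb_mobius_formula (F : ℕ → ℕ) (hF : ∀ s, 1 ≤ F s) (hF0 : F 0 = 1)
    (μ : Cobweb F → Cobweb F → ℤ)
    (hdiag : ∀ x, μ x x = 1)
    (hrec : ∀ x y, x < y → μ x y = -∑ᶠ z ∈ Set.Ico x y, μ x z)
    (hzero : ∀ x y, ¬x ≤ y → μ x y = 0) :
    ∀ x y : Cobweb F,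
      (μ x x = 1) ∧
      (y.val.2 = x.val.2 + 1 → μ x y = -1) ∧
      (x.val.2 + 2 ≤ y.val.2 →
        μ x y = (-1) ^ (y.val.2 - x.val.2) *
          ∏ i ∈ Finset.Icc (x.val.2 + 1) (y.val.2 - 1), ((F i : ℤ) - 1)) ∧
      (¬x ≤ y → μ x y = 0) :=
  cobweb_mobius_formula_general F μ hdiag hrec hzero
end

section
/- For k ≥ 1 and elements x = (s, t) and y = (u, v) of the cobweb poset Π(F), the number of maximal chains x = z₀ ⋖ z₁ ⋖ ⋯ ⋖ z_{k−1} ⋖ z_k = y of length k (each z_{i+1} covering z_i) equals F(t+1) · F(t+2) ⋯ F(v−1) if v = t + k and x ≤ y, and equals 0 if v ≠ t + k. -/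
/-!
Since every level of `Π(F)` is nonempty, `a ⋖ b` holds exactly when `b` lies one level above
`a`. So a chain of `k` covers starting at `x = (s, t)` visits the levels `t, t + 1, …, t + k` in
turn, and its inner elements `z_j` (`0 < j < k`) can be chosen freely and independently from
level `t + j`, which has `F (t + j)` elements. There is no such chain ending at `y` unless `y`
lies on level `t + k`.
-/

theorem Set.ncard_univ_pi {ι : Type*} [Fintype ι] {α : ι → Type*} (s : ∀ i, Set (α i)) :
    (Set.pi Set.univ s).ncard = ∏ i, (s i).ncard := by
  rw [← Nat.card_coe_set_eq, Nat.card_congr (Equiv.Set.univPi s), Nat.card_pi]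
  rfl

theorem Finset.prod_Icc_add_one_eq_prod_fin {M : Type*} [CommMonoid M] (f : ℕ → M) (a m : ℕ) :
    ∏ i ∈ Icc (a + 1) (a + m), f i = ∏ i : Fin m, f (a + (i + 1)) := by
  rw [Fin.prod_univ_eq_prod_range (fun i => f (a + (i + 1))), ← Finset.Ico_add_one_right_eq_Icc,
    Finset.prod_Ico_eq_prod_range, Nat.add_sub_add_right, Nat.add_sub_cancel_left]
  simp only [Nat.add_right_comm a 1, add_assoc]

theorem Fin.apply_eq_apply_zero_add_of_succ {k : ℕ} (a : Fin (k + 1) → ℕ)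
    (h : ∀ i : Fin k, a i.succ = a i.castSucc + 1) (j : Fin (k + 1)) : a j = a 0 + j :=
  Fin.induction (by simp) (fun i ih => by rw [h, ih]; simp [add_assoc]) j

namespace Cobweb

variable {F : ℕ → ℕ}

theorem lt_iff_snd_lt {a b : Cobweb F} : a < b ↔ a.val.2 < b.val.2 := by
  rw [lt_iff_le_not_ge]
  change (_ ∨ _) ∧ ¬ (_ ∨ _) ↔ _
  constructor
  · rintro ⟨h | h, h'⟩ <;> omega
  · intro h; omega

theorem covBy_iff (hF : ∀ s, 1 ≤ F s) {a b : Cobweb F} : a ⋖ b ↔ b.val.2 = a.val.2 + 1 := by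
  refine ⟨fun ⟨hab, hmid⟩ => ?_, fun h => ⟨lt_iff_snd_lt.2 (by omega), fun c hac hcb => ?_⟩⟩
  · rw [lt_iff_snd_lt] at hab
    by_contra hne
    let c : Cobweb F := ⟨(1, a.val.2 + 1), le_rfl, hF _⟩
    exact hmid (c := c) (lt_iff_snd_lt.2 (Nat.lt_succ_self _))
      (lt_iff_snd_lt.2 (by simp [c]; omega))
  · rw [lt_iff_snd_lt] at hac hcb
    omega

theorem ncard_setOf_snd_eq (s : ℕ) : {p : Cobweb F | p.val.2 = s}.ncard = F s := by
  have himage : (fun p : Cobweb F => p.val.1) '' {p | p.val.2 = s} = Set.Icc 1 (F s) := by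
    ext n
    constructor
    · rintro ⟨p, rfl, rfl⟩
      exact p.property
    · intro hn
      exact ⟨⟨(n, s), hn⟩, rfl, rfl⟩
  have hinj : Set.InjOn (fun p : Cobweb F => p.val.1) {p | p.val.2 = s} :=
    fun p hp q hq h => Subtype.ext (Prod.ext h (hp.trans hq.symm))
  rw [← hinj.ncard_image, himage, Set.ncard_Icc_nat, Nat.add_sub_cancel]

theorem snd_eq_of_forall_covBy (hF : ∀ s, 1 ≤ F s) {k : ℕ} {c : Fin (k + 1) → Cobweb F}
    (hc : ∀ i : Fin k, c i.castSucc ⋖ c i.succ) (j : Fin (k + 1)) :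
    (c j).val.2 = (c 0).val.2 + j :=
  Fin.apply_eq_apply_zero_add_of_succ (fun j => (c j).val.2) (fun i => (covBy_iff hF).1 (hc i)) j

def chainCandidates (x y : Cobweb F) (k : ℕ) (j : Fin (k + 1)) : Set (Cobweb F) :=
  {p | p.val.2 = x.val.2 + j ∧ (j = 0 → p = x) ∧ (j = Fin.last k → p = y)}

theorem setOf_covBy_chain_eq_pi (hF : ∀ s, 1 ≤ F s) (x y : Cobweb F) (k : ℕ) :
    {c : Fin (k + 1) → Cobweb F |
        (∀ i : Fin k, c i.castSucc ⋖ c i.succ) ∧ c 0 = x ∧ c (Fin.last k) = y} =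
      Set.pi Set.univ (chainCandidates x y k) := by
  ext c
  simp only [Set.mem_ofPred_eq, Set.mem_univ_pi, chainCandidates]
  constructor
  · rintro ⟨hc, rfl, rfl⟩ j
    exact ⟨snd_eq_of_forall_covBy hF hc j, fun h => h ▸ rfl, fun h => h ▸ rfl⟩
  · intro hc
    refine ⟨fun i => (covBy_iff hF).2 ?_, (hc 0).2.1 rfl, (hc _).2.2 rfl⟩
    rw [(hc _).1, (hc _).1, Fin.val_succ, Fin.val_castSucc, add_assoc]

variable (x y : Cobweb F) (m : ℕ)

theorem ncard_chainCandidates_zero : (chainCandidates x y (m + 1) 0).ncard = 1 := by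
  rw [Set.ncard_eq_one]
  refine ⟨x, Set.eq_singleton_iff_unique_mem.2 ⟨?_, fun p hp => hp.2.1 rfl⟩⟩
  exact ⟨by simp, fun _ => rfl, fun h => absurd h.symm (Fin.last_pos.ne')⟩

theorem ncard_chainCandidates_last :
    (chainCandidates x y (m + 1) (Fin.last _)).ncard =
      if y.val.2 = x.val.2 + (m + 1) then 1 else 0 := by
  have hcand : chainCandidates x y (m + 1) (Fin.last _) =
      {p | p.val.2 = x.val.2 + (m + 1) ∧ p = y} := by
    simp [chainCandidates, (Fin.last_pos (n := m)).ne']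
  split_ifs with hy
  · rw [hcand, Set.ncard_eq_one]
    exact ⟨y, Set.eq_singleton_iff_unique_mem.2 ⟨⟨hy, rfl⟩, fun p hp => hp.2⟩⟩
  · have hempty : {p : Cobweb F | p.val.2 = x.val.2 + (m + 1) ∧ p = y} = ∅ :=
      Set.eq_empty_of_forall_notMem fun p ⟨hp, hpy⟩ => hy (hpy ▸ hp)
    rw [hcand, hempty, Set.ncard_empty]

theorem ncard_chainCandidates_of_ne {j : Fin (m + 2)} (h0 : j ≠ 0) (hlast : j ≠ Fin.last _) :
    (chainCandidates x y (m + 1) j).ncard = F (x.val.2 + j) := by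
  simp only [chainCandidates, h0, hlast, IsEmpty.forall_iff, and_true]
  exact ncard_setOf_snd_eq _

end Cobweb

theorem cobweb_count_maximal_chains_of_length_general (F : ℕ → ℕ) (hF : ∀ s, 1 ≤ F s)
    (k : ℕ) (hk : 1 ≤ k) (x y : Cobweb F) :
    (y.val.2 = x.val.2 + k → x ≤ y →
      {c : Fin (k + 1) → Cobweb F |
          (∀ i : Fin k, c i.castSucc ⋖ c i.succ) ∧ c 0 = x ∧ c (Fin.last k) = y}.ncard =
        ∏ i ∈ Finset.Icc (x.val.2 + 1) (y.val.2 - 1), F i) ∧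
    (y.val.2 ≠ x.val.2 + k →
      {c : Fin (k + 1) → Cobweb F |
          (∀ i : Fin k, c i.castSucc ⋖ c i.succ) ∧ c 0 = x ∧ c (Fin.last k) = y}.ncard = 0) := by
  obtain ⟨m, rfl⟩ : ∃ m, k = m + 1 := ⟨k - 1, by omega⟩
  have hcount : {c : Fin (m + 2) → Cobweb F |
      (∀ i : Fin (m + 1), c i.castSucc ⋖ c i.succ) ∧ c 0 = x ∧ c (Fin.last _) = y}.ncard =
        (∏ i : Fin m, F (x.val.2 + (i + 1))) * if y.val.2 = x.val.2 + (m + 1) then 1 else 0 := by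
    rw [Cobweb.setOf_covBy_chain_eq_pi hF, Set.ncard_univ_pi, Fin.prod_univ_succ,
      Fin.prod_univ_castSucc, Fin.succ_last, Cobweb.ncard_chainCandidates_zero,
      Cobweb.ncard_chainCandidates_last, one_mul]
    congr 1
    refine Finset.prod_congr rfl fun i _ => ?_
    rw [Cobweb.ncard_chainCandidates_of_ne _ _ _ (Fin.succ_ne_zero _)
      (Fin.succ_castSucc i ▸ (Fin.castSucc_lt_last _).ne), Fin.val_succ, Fin.val_castSucc]
  refine ⟨fun hy _ => ?_, fun hy => ?_⟩
  · rw [hcount, if_pos hy, mul_one, hy, Nat.add_succ_sub_one,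
      Finset.prod_Icc_add_one_eq_prod_fin]
  · rw [hcount, if_neg hy, mul_zero]

/-- for `k ≥ 1`, the number of maximal chains
`x = z₀ ⋖ z₁ ⋖ ⋯ ⋖ z_k = y` of length `k` from `x = (s, t)` to `y = (u, v)`
equals `F(t+1) · F(t+2) ⋯ F(v-1)` if `v = t + k` and `x ≤ y`, and equals `0`
if `v ≠ t + k`. -/
theorem cobweb_count_maximal_chains_of_length (F : ℕ → ℕ) (hF : ∀ s, 1 ≤ F s)
    (hF0 : F 0 = 1) (k : ℕ) (hk : 1 ≤ k) (x y : Cobweb F) :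
    (y.val.2 = x.val.2 + k → x ≤ y →
      {c : Fin (k + 1) → Cobweb F |
          (∀ i : Fin k, c i.castSucc ⋖ c i.succ) ∧ c 0 = x ∧ c (Fin.last k) = y}.ncard =
        ∏ i ∈ Finset.Icc (x.val.2 + 1) (y.val.2 - 1), F i) ∧
    (y.val.2 ≠ x.val.2 + k →
      {c : Fin (k + 1) → Cobweb F |
          (∀ i : Fin k, c i.castSucc ⋖ c i.succ) ∧ c 0 = x ∧ c (Fin.last k) = y}.ncard = 0) :=
  cobweb_count_maximal_chains_of_length_general F hF k hk x y
end

section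
/- For elements x = (s, t) and y = (u, v) of the cobweb poset Π(F) with x < y, the total number of maximal chains from x to y (saturated chains x = z₀ ⋖ z₁ ⋖ ⋯ ⋖ z_m = y of any length m ≥ 1) equals Π_{i=t+1}^{v−1} F i. -/
/-!
Since every level of `Π(F)` is nonempty, `a ⋖ b` holds exactly when `b` lies on the level just
above that of `a`. A maximal chain from `x` (level `t`) to `y` (level `v`) therefore passes through
exactly one element of each level `t + 1, …, v - 1`, and every such choice of elements is a maximal
chain. Level `s` has `F s` elements, so the chains are counted by `∏_{i=t+1}^{v-1} F i`.
-/

theorem List.isChain_succ_iff_map_eq_range' {α : Type*} (f : α → ℕ) (a : α) (l : List α) :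
    (a :: l).IsChain (fun b c => f c = f b + 1) ↔
      (a :: l).map f = List.range' (f a) (l.length + 1) := by
  refine ⟨fun h => ?_, fun h => (List.isChain_map f).1 (h ▸ List.isChain_range' _ _ 1)⟩
  induction l generalizing a with
  | nil => rfl
  | cons b l ih =>
    obtain ⟨hab, hl⟩ := List.isChain_cons_cons.1 h
    rw [List.map_cons, ih b hl, hab]
    rfl

namespace Cobweb

variable {F : ℕ → ℕ}

def level (a : Cobweb F) : ℕ := a.val.2

theorem lt_iff_level_lt {a b : Cobweb F} : a < b ↔ a.level < b.level := by
  change (_ ∧ ¬ _) ↔ _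
  simp only [level, (· ≤ ·)]
  omega

theorem covBy_iff_level_eq_succ (hF : ∀ s, 1 ≤ F s) {a b : Cobweb F} :
    a ⋖ b ↔ b.level = a.level + 1 := by
  simp only [CovBy, lt_iff_level_lt]
  refine ⟨fun ⟨hab, hmid⟩ => ?_, fun h => ⟨by omega, fun c hac hcb => by omega⟩⟩
  by_contra hne
  exact hmid (c := ⟨(1, a.level + 1), le_rfl, hF _⟩) (Nat.lt_succ_self _)
    (show a.level + 1 < b.level by omega)

theorem card_level_eq (s : ℕ) : Nat.card {a : Cobweb F // a.level = s} = F s := by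
  let e : {a : Cobweb F // a.level = s} ≃ Set.Icc 1 (F s) :=
    { toFun a := ⟨a.1.val.1, a.1.2.1, a.1.2.2.trans_eq (congrArg F a.2)⟩
      invFun j := ⟨⟨(j, s), j.2⟩, rfl⟩
      left_inv a := by obtain ⟨⟨⟨j, s⟩, _⟩, rfl⟩ := a; rfl
      right_inv j := rfl }
  rw [Nat.card_congr e, Nat.card_coe_set_eq, Set.ncard_Icc_nat]
  omega

def maximalChain (x y : Cobweb F) {m : ℕ}
    (g : (i : Fin m) → {a : Cobweb F // a.level = x.level + 1 + i}) : List (Cobweb F) :=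
  x :: (List.ofFn (fun i => (g i).1) ++ [y])

theorem maximalChain_injective (x y : Cobweb F) (m : ℕ) :
    Function.Injective (maximalChain x y (m := m)) := by
  intro g g' h
  simp only [maximalChain, List.cons.injEq, List.append_cancel_right_eq, List.ofFn_inj,
    true_and] at h
  exact funext fun i => Subtype.ext (congrFun h i)

theorem map_level_maximalChain {x y : Cobweb F} {m : ℕ} (hm : y.level = x.level + 1 + m)
    (g : (i : Fin m) → {a : Cobweb F // a.level = x.level + 1 + i}) :
    (maximalChain x y g).map level = List.range' x.level (m + 2) := by
  have hmids : List.ofFn (fun i => (g i).1.level) = List.range' (x.level + 1) m :=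
    List.ext_getElem (by simp) fun i hi _ => by simp [(g ⟨i, by simpa using hi⟩).2]
  rw [List.range'_succ, List.range'_1_concat, ← hmids, ← hm]
  simp [maximalChain, List.map_ofFn, Function.comp_def]

theorem isChain_covBy_maximalChain (hF : ∀ s, 1 ≤ F s) {x y : Cobweb F} {m : ℕ}
    (hm : y.level = x.level + 1 + m)
    (g : (i : Fin m) → {a : Cobweb F // a.level = x.level + 1 + i}) :
    (maximalChain x y g).IsChain (· ⋖ ·) := by
  refine ((List.isChain_succ_iff_map_eq_range' level x _).2 ?_).imp
    fun a b => (covBy_iff_level_eq_succ hF).2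
  rw [← maximalChain, map_level_maximalChain hm]
  simp

theorem exists_maximalChain_eq (hF : ∀ s, 1 ≤ F s) {x y : Cobweb F} {m : ℕ}
    (hm : y.level = x.level + 1 + m) {l : List (Cobweb F)} (hl : l.IsChain (· ⋖ ·))
    (hx : l.head? = some x) (hy : l.getLast? = some y) (h2 : 2 ≤ l.length) :
    ∃ g, maximalChain x y (m := m) g = l := by
  obtain ⟨l', rfl⟩ := List.head?_eq_some_iff.1 hx
  obtain ⟨mids, rfl⟩ : ∃ mids, l' = mids ++ [y] := by
    refine ⟨l'.dropLast, (List.dropLast_append_getLast? y ?_).symm⟩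
    cases l' with
    | nil => simp at h2
    | cons b l' => rwa [List.getLast?_cons_cons] at hy
  have hlev := (List.isChain_succ_iff_map_eq_range' level x _).1
    (hl.imp fun a b => (covBy_iff_level_eq_succ hF).1)
  rw [List.map_cons, List.map_append, List.map_singleton, List.length_append,
    List.length_singleton, List.range'_succ, List.range'_1_concat, List.cons_inj_right] at hlev
  obtain ⟨hmids, hlast⟩ := List.append_inj hlev (by simp)
  obtain rfl : mids.length = m := by
    rw [List.singleton_inj] at hlast
    omega
  refine ⟨fun i => ⟨mids[i], ?_⟩, ?_⟩
  · simpa using congrArg (·[i]?) hmids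
  · simp [maximalChain, List.ofFn_getElem]

theorem setOf_isChain_covBy_eq_range (hF : ∀ s, 1 ≤ F s) {x y : Cobweb F} {m : ℕ}
    (hm : y.level = x.level + 1 + m) :
    {l : List (Cobweb F) | l.IsChain (· ⋖ ·) ∧ l.head? = some x ∧ l.getLast? = some y ∧
        2 ≤ l.length} = Set.range (maximalChain x y (m := m)) := by
  ext l
  constructor
  · rintro ⟨hl, hx, hy, h2⟩
    exact exists_maximalChain_eq hF hm hl hx hy h2
  · rintro ⟨g, rfl⟩
    exact ⟨isChain_covBy_maximalChain hF hm g, rfl,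
      by rw [maximalChain, ← List.cons_append, List.getLast?_concat], by simp [maximalChain]⟩

end Cobweb

theorem cobweb_count_all_maximal_chains_general (F : ℕ → ℕ) (hF : ∀ s, 1 ≤ F s)
    (x y : Cobweb F) (hxy : x < y) :
    {l : List (Cobweb F) | l.Chain' (· ⋖ ·) ∧ l.head? = some x ∧
        l.getLast? = some y ∧ 2 ≤ l.length}.ncard =
      ∏ i ∈ Finset.Icc (x.val.2 + 1) (y.val.2 - 1), F i := by
  set m := y.level - x.level - 1
  have hm : y.level = x.level + 1 + m := by
    have := Cobweb.lt_iff_level_lt.1 hxy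
    omega
  calc _ = (Set.range (Cobweb.maximalChain x y (m := m))).ncard :=
        congrArg Set.ncard (Cobweb.setOf_isChain_covBy_eq_range hF hm)
    _ = ∏ i : Fin m, F (x.level + 1 + i) := by
      rw [Set.ncard_range_of_injective (Cobweb.maximalChain_injective x y m), Nat.card_pi]
      simp only [Cobweb.card_level_eq]
    _ = ∏ i ∈ Finset.Icc (x.level + 1) (y.level - 1), F i := by
      rw [← Finset.Ico_add_one_right_eq_Icc, Nat.sub_add_cancel (by omega),
        Finset.prod_Ico_eq_prod_range, hm, Nat.add_sub_cancel_left]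
      exact Fin.prod_univ_eq_prod_range (fun k => F (x.level + 1 + k)) m

/-- for `x = (s, t) < y = (u, v)`, the total number of maximal
(saturated) chains `x = z₀ ⋖ z₁ ⋖ ⋯ ⋖ z_m = y` (of any length `m ≥ 1`,
encoded as lists of consecutive covers from `x` to `y`) equals
`Π_{i=t+1}^{v-1} F i`. -/
theorem cobweb_count_all_maximal_chains (F : ℕ → ℕ) (hF : ∀ s, 1 ≤ F s)
    (hF0 : F 0 = 1) (x y : Cobweb F) (hxy : x < y) :
    {l : List (Cobweb F) | l.Chain' (· ⋖ ·) ∧ l.head? = some x ∧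
        l.getLast? = some y ∧ 2 ≤ l.length}.ncard =
      ∏ i ∈ Finset.Icc (x.val.2 + 1) (y.val.2 - 1), F i :=
  cobweb_count_all_maximal_chains_general F hF x y hxy
end
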